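/- Let γ : ℝ → E be a unit-speed curve and v₂ : ℝ → E a differentiable map such that for every t the vectors {γ'(t), v₂(t)} are orthonormal, and suppose there is a constant κ₁ > 0 with γ''(t) = κ₁·v₂(t) and v₂'(t) = -κ₁·γ'(t) for all t (a circle of osculating order 2). Assume γ is a Legendre curve (γ'_{2n+α}(t) = 0 and (v₂(t))_{2n+α} = 0 for all t and all α ∈ {1,…,s}) and that for every t, φ(γ'(t)) lies in the linear span of {γ'(t), v₂(t), e_{2n+1}, …, e_{2n+s}}. Then there exists q ∈ ℝ with |q| = κ₁ such that γ''(t) = -q·φ(γ'(t)) for all t; that is, γ is a magnetic circle generated by the magnetic field F_{±κ₁}. -/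

import Mathlib

open scoped RealInnerProductSpace

/-!
`φ(γ')` is orthogonal to `γ'` (`φ` is skew) and to every `ξ_α`, so the `φ`-invariance of
`sp{γ', v₂, ξ_α}` forces `φ(γ') = c • v₂` with `c = ⟪v₂, φ(γ')⟫`. On vectors with vanishing
`ξ`-components `φ` is an isometry, so `c ^ 2 = 1`; being continuous on `ℝ`, `c` is constantly
`1` or `-1`, and `γ'' = κ₁ • v₂ = (κ₁ * c) • φ(γ')` gives `q = -c κ₁`.
-/

/-- The structure tensor `φ` of the standard `C`-manifold structure on `ℝ^{2n+s}`:
`(φv)_i = v_{n+i}`, `(φv)_{n+i} = -v_i` for `0 ≤ i < n`, and `(φv)_{2n+α} = 0`. -/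
noncomputable def phi (n s : ℕ) (v : EuclideanSpace ℝ (Fin (2*n+s))) :
    EuclideanSpace ℝ (Fin (2*n+s)) := WithLp.toLp 2 fun (k : Fin (2*n+s)) =>
  if _h1 : (k : ℕ) < n then v ⟨n + (k : ℕ), by omega⟩
  else if _h2 : (k : ℕ) < 2*n then -v ⟨(k : ℕ) - n, by omega⟩
  else 0

/-- The index `2n+α` of the characteristic direction `ξ_α = e_{2n+α}`. -/
def idxA (n s : ℕ) (α : Fin s) : Fin (2*n+s) := ⟨2*n + (α : ℕ), by omega⟩

/-- The index `i` for `1 ≤ i ≤ n` (0-based). -/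
def idxI (n s : ℕ) (i : Fin n) : Fin (2*n+s) := ⟨(i : ℕ), by omega⟩

/-- The index `n+i` for `1 ≤ i ≤ n` (0-based). -/
def idxNI (n s : ℕ) (i : Fin n) : Fin (2*n+s) := ⟨n + (i : ℕ), by omega⟩

open Submodule in
theorem eq_inner_smul_of_mem_span_insert {E : Type*} [NormedAddCommGroup E]
    [InnerProductSpace ℝ E] {S : Set E} {v x : E} (hv : ‖v‖ = 1)
    (hvS : ∀ y ∈ S, ⟪v, y⟫ = 0) (hxS : ∀ y ∈ S, ⟪x, y⟫ = 0)
    (hx : x ∈ span ℝ (insert v S)) : x = ⟪v, x⟫ • v := by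
  obtain ⟨a, z, hz, rfl⟩ := mem_span_insert.mp hx
  have inner_z : ∀ w : E, (∀ y ∈ S, ⟪w, y⟫ = 0) → ⟪w, z⟫ = 0 := fun w hw =>
    mem_orthogonal_singleton_iff_inner_right.mp <|
      span_le.mpr (fun y hy => mem_orthogonal_singleton_iff_inner_right.mpr (hw y hy)) hz
  have hvz := inner_z v hvS
  have hz0 : z = 0 := by
    have h := inner_z _ hxS
    rw [inner_add_left, real_inner_smul_left, hvz, mul_zero, zero_add] at h
    exact inner_self_eq_zero.mp h
  subst hz0
  simp [real_inner_smul_right, hv]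

section Phi

variable {n s : ℕ}

theorem phi_apply_idxI (v : EuclideanSpace ℝ (Fin (2*n+s))) (i : Fin n) :
    phi n s v (idxI n s i) = v (idxNI n s i) := by
  simp only [phi, idxI, idxNI, PiLp.toLp_apply]
  rw [dif_pos i.2]

theorem phi_apply_idxNI (v : EuclideanSpace ℝ (Fin (2*n+s))) (i : Fin n) :
    phi n s v (idxNI n s i) = -v (idxI n s i) := by
  simp only [phi, idxNI, idxI, PiLp.toLp_apply]
  rw [dif_neg (by omega), dif_pos (by omega), neg_inj]
  exact congrArg v (Fin.ext (by simp))

theorem phi_apply_idxA (v : EuclideanSpace ℝ (Fin (2*n+s))) (α : Fin s) :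
    phi n s v (idxA n s α) = 0 := by
  simp only [phi, idxA, PiLp.toLp_apply]
  rw [dif_neg (by omega), dif_neg (by omega)]

theorem sum_fin_two_mul_add (f : Fin (2*n+s) → ℝ) :
    ∑ k, f k = ∑ i : Fin n, f (idxI n s i) + ∑ i : Fin n, f (idxNI n s i)
      + ∑ α : Fin s, f (idxA n s α) := by
  rw [Fin.sum_univ_add, Fintype.sum_equiv (finCongr (two_mul n)) _
      (fun j : Fin (n+n) => f (Fin.castAdd s ((finCongr (two_mul n)).symm j)))
      (fun i => by simp), Fin.sum_univ_add]
  rfl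

theorem inner_phi_left (v w : EuclideanSpace ℝ (Fin (2*n+s))) :
    ⟪phi n s v, w⟫ = ∑ i : Fin n,
      (v (idxNI n s i) * w (idxI n s i) - v (idxI n s i) * w (idxNI n s i)) := by
  simp only [PiLp.inner_apply, RCLike.inner_apply, conj_trivial]
  rw [sum_fin_two_mul_add, Finset.sum_sub_distrib]
  simp only [phi_apply_idxI, phi_apply_idxNI, phi_apply_idxA, mul_comm, zero_mul, neg_mul,
    Finset.sum_const_zero, add_zero, Finset.sum_neg_distrib, sub_eq_add_neg]

theorem inner_phi_self (v : EuclideanSpace ℝ (Fin (2*n+s))) : ⟪phi n s v, v⟫ = 0 := by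
  rw [inner_phi_left]
  exact Finset.sum_eq_zero fun i _ => by ring

theorem inner_phi_single_idxA (v : EuclideanSpace ℝ (Fin (2*n+s))) (α : Fin s) :
    ⟪phi n s v, EuclideanSpace.single (idxA n s α) (1 : ℝ)⟫ = 0 := by
  simp [EuclideanSpace.inner_single_right, phi_apply_idxA]

theorem norm_phi_of_apply_idxA_eq_zero {v : EuclideanSpace ℝ (Fin (2*n+s))}
    (hv : ∀ α : Fin s, v (idxA n s α) = 0) : ‖phi n s v‖ = ‖v‖ := by
  rw [← sq_eq_sq₀ (norm_nonneg _) (norm_nonneg _), ← real_inner_self_eq_norm_sq,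
    ← real_inner_self_eq_norm_sq, inner_phi_left]
  simp only [PiLp.inner_apply, RCLike.inner_apply, conj_trivial]
  rw [sum_fin_two_mul_add]
  simp only [phi_apply_idxI, phi_apply_idxNI, hv, mul_zero, Finset.sum_const_zero, add_zero,
    ← Finset.sum_add_distrib]
  exact Finset.sum_congr rfl fun i _ => by ring

theorem continuous_phi : Continuous (phi n s) := by
  refine (PiLp.continuous_toLp 2 _).comp (continuous_pi fun k => ?_)
  split_ifs
  · exact PiLp.continuous_apply 2 _ _
  · exact (PiLp.continuous_apply 2 _ _).neg
  · exact continuous_const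

end Phi

section Frame

variable {n s : ℕ} {T V : EuclideanSpace ℝ (Fin (2*n+s))}

theorem phi_eq_inner_smul_of_mem_span (hV : ‖V‖ = 1) (hTV : ⟪T, V⟫ = 0)
    (hV_leg : ∀ α : Fin s, V (idxA n s α) = 0)
    (hinv : phi n s T ∈ Submodule.span ℝ
      ({T, V} ∪ Set.range (fun α : Fin s => EuclideanSpace.single (idxA n s α) (1 : ℝ)))) :
    phi n s T = ⟪V, phi n s T⟫ • V := by
  have hspan : ({T, V} ∪ Set.range (fun α : Fin s => EuclideanSpace.single (idxA n s α) (1 : ℝ)))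
      = insert V (insert T (Set.range fun α => EuclideanSpace.single (idxA n s α) 1)) := by
    rw [Set.insert_union, Set.singleton_union, Set.insert_comm]
  rw [hspan] at hinv
  refine eq_inner_smul_of_mem_span_insert hV ?_ ?_ hinv
  · simp [real_inner_comm T, hTV, EuclideanSpace.inner_single_right, hV_leg]
  · simp only [Set.forall_mem_insert, Set.forall_mem_range]
    exact ⟨inner_phi_self T, inner_phi_single_idxA T⟩

theorem inner_phi_sq_eq_one (hT : ‖T‖ = 1) (hV : ‖V‖ = 1) (hTV : ⟪T, V⟫ = 0)
    (hleg : ∀ α : Fin s, T (idxA n s α) = 0 ∧ V (idxA n s α) = 0)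
    (hinv : phi n s T ∈ Submodule.span ℝ
      ({T, V} ∪ Set.range (fun α : Fin s => EuclideanSpace.single (idxA n s α) (1 : ℝ)))) :
    ⟪V, phi n s T⟫ ^ 2 = 1 := by
  have h := norm_phi_of_apply_idxA_eq_zero fun α => (hleg α).1
  rw [phi_eq_inner_smul_of_mem_span hV hTV (fun α => (hleg α).2) hinv, norm_smul, hV, hT,
    mul_one, Real.norm_eq_abs] at h
  rw [← sq_abs, h, one_pow]

end Frame

theorem legendre_phi_circle_is_magnetic_general
    (n s : ℕ)
    (γ v₂ : ℝ → EuclideanSpace ℝ (Fin (2*n+s)))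
    (hγ' : Differentiable ℝ (deriv γ))
    (hv₂ : Differentiable ℝ v₂)
    (hunit : ∀ t : ℝ, ‖deriv γ t‖ = 1)
    (horth : ∀ t : ℝ, ‖v₂ t‖ = 1 ∧ ⟪deriv γ t, v₂ t⟫ = 0)
    (κ₁ : ℝ) (hκ₁pos : 0 < κ₁)
    (hfr1 : ∀ t : ℝ, deriv (deriv γ) t = κ₁ • v₂ t)
    (hleg : ∀ t : ℝ, ∀ α : Fin s,
      deriv γ t (idxA n s α) = 0 ∧ v₂ t (idxA n s α) = 0)
    (hinv : ∀ t : ℝ, phi n s (deriv γ t) ∈ Submodule.span ℝ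
      ({deriv γ t, v₂ t} ∪
        Set.range (fun α : Fin s => EuclideanSpace.single (idxA n s α) (1 : ℝ)))) :
    ∃ q : ℝ, |q| = κ₁ ∧ ∀ t : ℝ, deriv (deriv γ) t = (-q) • phi n s (deriv γ t) := by
  set c : ℝ → ℝ := fun t => ⟪v₂ t, phi n s (deriv γ t)⟫
  have hφ (t : ℝ) : phi n s (deriv γ t) = c t • v₂ t :=
    phi_eq_inner_smul_of_mem_span (horth t).1 (horth t).2 (fun α => (hleg t α).2) (hinv t)
  have hc : Continuous c := hv₂.continuous.inner (continuous_phi.comp hγ'.continuous)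
  rcases isPreconnected_univ.eq_one_or_eq_neg_one_of_sq_eq hc.continuousOn
    (fun t _ => inner_phi_sq_eq_one (hunit t) (horth t).1 (horth t).2 (hleg t) (hinv t))
    with hc_one | hc_neg_one
  · refine ⟨-κ₁, by rw [abs_neg, abs_of_pos hκ₁pos], fun t => ?_⟩
    rw [hfr1, hφ, hc_one (Set.mem_univ t), Pi.one_apply, one_smul, neg_neg]
  · refine ⟨κ₁, abs_of_pos hκ₁pos, fun t => ?_⟩
    rw [hfr1, hφ, hc_neg_one (Set.mem_univ t), Pi.neg_apply, Pi.one_apply, smul_smul,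
      neg_mul_neg, mul_one]

/-- A Legendre `φ`-circle of osculating order 2 in the standard `C`-manifold `ℝ^{2n+s}` is
a magnetic circle generated by the magnetic field `F_{±κ₁}`: there is a charge `q` with
`|q| = κ₁` such that `γ'' = -q·φ(γ')`. -/
theorem legendre_phi_circle_is_magnetic
    (n s : ℕ) (hn : 0 < n) (hs : 0 < s)
    (γ v₂ : ℝ → EuclideanSpace ℝ (Fin (2*n+s)))
    (hγ : Differentiable ℝ γ) (hγ' : Differentiable ℝ (deriv γ))
    (hv₂ : Differentiable ℝ v₂)
    (hunit : ∀ t : ℝ, ‖deriv γ t‖ = 1)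
    (horth : ∀ t : ℝ, ‖v₂ t‖ = 1 ∧ ⟪deriv γ t, v₂ t⟫ = 0)
    (κ₁ : ℝ) (hκ₁pos : 0 < κ₁)
    (hfr1 : ∀ t : ℝ, deriv (deriv γ) t = κ₁ • v₂ t)
    (hfr2 : ∀ t : ℝ, deriv v₂ t = (-κ₁) • deriv γ t)
    (hleg : ∀ t : ℝ, ∀ α : Fin s,
      deriv γ t (idxA n s α) = 0 ∧ v₂ t (idxA n s α) = 0)
    (hinv : ∀ t : ℝ, phi n s (deriv γ t) ∈ Submodule.span ℝ
      ({deriv γ t, v₂ t} ∪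
        Set.range (fun α : Fin s => EuclideanSpace.single (idxA n s α) (1 : ℝ)))) :
    ∃ q : ℝ, |q| = κ₁ ∧ ∀ t : ℝ, deriv (deriv γ) t = (-q) • phi n s (deriv γ t) :=
  legendre_phi_circle_is_magnetic_general n s γ v₂ hγ' hv₂ hunit horth κ₁ hκ₁pos hfr1 hleg hinv
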